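/- Let c, λ_d, λ_f, q, α be real numbers and define f_d : ℝ → ℝ on (-1,∞) by f_d(x) = c·(1+x)^{-α}·exp(-q·x²/(1+x)). Then for every real y > -1, f_d(-y/(1+y)) · (1+y)^{-3} · (λ_d/λ_f) = c·(λ_d/λ_f)·(1+y)^{-(3-α)}·exp(-q·y²/(1+y)). In other words, the transformed density is again of power-law-with-exponential-cutoff type, with the same cutoff function and new scaling parameter β = 3-α. -/

import Mathlib

/-!
Under `x = -y/(1+y)` one has `1 + x = (1+y)⁻¹` and `x²/(1+x) = y²/(1+y)`: the cutoff is
invariant under FX inversion, while the power `(1+x)^{-α} = (1+y)^α` combines with the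
Jacobian factor `(1+y)^{-3}` into `(1+y)^{-(3-α)}`.
-/

lemma one_add_neg_div_one_add {y : ℝ} (hy : 1 + y ≠ 0) : 1 + -y / (1 + y) = (1 + y)⁻¹ := by
  field_simp
  ring

lemma neg_mul_sq_div_one_add_neg_div_one_add (q : ℝ) {y : ℝ} (hy : 1 + y ≠ 0) :
    -q * (-y / (1 + y)) ^ 2 / (1 + -y / (1 + y)) = -q * y ^ 2 / (1 + y) := by
  rw [one_add_neg_div_one_add hy]
  field_simp

/-- The power-law-with-exponential-cutoff density class is closed under FX inversion:
if `f_d(x) = c (1+x)^{-α} e^{-q x²/(1+x)}` on `(-1,∞)`, then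
`f_d(-y/(1+y)) (1+y)⁻³ (λ_d/λ_f) = c (λ_d/λ_f) (1+y)^{-(3-α)} e^{-q y²/(1+y)}`. -/
theorem power_law_cutoff_density_consistent
    (c lamd lamf q α : ℝ) (fd : ℝ → ℝ)
    (hfd : ∀ x ∈ Set.Ioi (-1 : ℝ),
      fd x = c * (1 + x) ^ (-α) * Real.exp (-q * x ^ 2 / (1 + x)))
    (y : ℝ) (hy : -1 < y) :
    fd (-y / (1 + y)) * (1 + y) ^ (-(3 : ℝ)) * (lamd / lamf) =
      c * (lamd / lamf) * (1 + y) ^ (-(3 - α)) * Real.exp (-q * y ^ 2 / (1 + y)) := by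
  have hpos : 0 < 1 + y := by linarith
  have hx : 1 + -y / (1 + y) = (1 + y)⁻¹ := one_add_neg_div_one_add hpos.ne'
  have hmem : -y / (1 + y) ∈ Set.Ioi (-1 : ℝ) := by
    have : 0 < 1 + -y / (1 + y) := hx ▸ inv_pos.mpr hpos
    rw [Set.mem_Ioi]
    linarith
  rw [hfd _ hmem, neg_mul_sq_div_one_add_neg_div_one_add q hpos.ne', hx,
    Real.inv_rpow hpos.le, ← Real.rpow_neg hpos.le, neg_neg,
    show -(3 - α) = α + -3 by ring, Real.rpow_add hpos]
  ring
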